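/- In the Khalimsky plane, if p and q are pure points lying on the same diagonal (i.e., |i'-i| = |j'-j| for p=(i,j), q=(i',j')), then the shortest COTS-arc connecting p and q is unique, and it consists exactly of the points of the diagonal between p and q. -/

import Mathlib

open Set

/-- The minimal open neighborhood of a point in a topological space. -/
def minOpenNhd {X : Type*} (t : TopologicalSpace X) (x : X) : Set X :=
  ⋂₀ {U : Set X | t.IsOpen U ∧ x ∈ U}

/-- The specialization-style preorder: `x ≤ y` iff `U_x ⊆ U_y`. -/
def specLE {X : Type*} (t : TopologicalSpace X) (x y : X) : Prop :=
  minOpenNhd t x ⊆ minOpenNhd t y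

/-- Two points are adjacent if distinct and comparable in the specialization order. -/
def Adjacent {X : Type*} (t : TopologicalSpace X) (x y : X) : Prop :=
  x ≠ y ∧ (specLE t x y ∨ specLE t y x)

/-- The adjacency set of a point. -/
def adjSet {X : Type*} (t : TopologicalSpace X) (x : X) : Set X := {y | Adjacent t x y}

/-- A COTS: a connected space in which every 3-point subset has a point separating
the other two. -/
def IsCOTS {X : Type*} (t : TopologicalSpace X) : Prop :=
  @ConnectedSpace X t ∧
    ∀ Y : Set X, Y.ncard = 3 →
      ∃ y ∈ Y, ∃ a ∈ Y \ {y}, ∃ b ∈ Y \ {y},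
        @connectedComponentIn X t {y}ᶜ a ≠ @connectedComponentIn X t {y}ᶜ b

/-- An endpoint of a COTS: a point with at most one neighbor. -/
def IsEndpoint {X : Type*} (t : TopologicalSpace X) (x : X) : Prop :=
  (adjSet t x).ncard ≤ 1

/-- A COTS-path: the continuous image of a finite COTS. -/
def IsCOTSPath {Y : Type*} (tY : TopologicalSpace Y) (P : Set Y) : Prop :=
  ∃ (C : Type) (tC : TopologicalSpace C), Finite C ∧ IsCOTS tC ∧
    ∃ f : C → Y, @Continuous C Y tC tY f ∧ Set.range f = P

/-- A COTS-path with prescribed start and end points. -/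
def IsCOTSPathFromTo {Y : Type*} (tY : TopologicalSpace Y) (P : Set Y) (a b : Y) : Prop :=
  ∃ (C : Type) (tC : TopologicalSpace C), Finite C ∧ IsCOTS tC ∧
    ∃ f : C → Y, @Continuous C Y tC tY f ∧ Set.range f = P ∧
      ∃ c₀ c₁ : C, IsEndpoint tC c₀ ∧ IsEndpoint tC c₁ ∧ f c₀ = a ∧ f c₁ = b

/-- A COTS-arc: the homeomorphic image of a finite COTS. -/
def IsCOTSArc {Y : Type*} (tY : TopologicalSpace Y) (A : Set Y) : Prop :=
  ∃ (C : Type) (tC : TopologicalSpace C), Finite C ∧ IsCOTS tC ∧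
    ∃ f : C → Y, @Topology.IsEmbedding C Y tC tY f ∧ Set.range f = A

/-- A COTS-arc with prescribed endpoints. -/
def IsCOTSArcFromTo {Y : Type*} (tY : TopologicalSpace Y) (A : Set Y) (a b : Y) : Prop :=
  ∃ (C : Type) (tC : TopologicalSpace C), Finite C ∧ IsCOTS tC ∧
    ∃ f : C → Y, @Topology.IsEmbedding C Y tC tY f ∧ Set.range f = A ∧
      ∃ c₀ c₁ : C, IsEndpoint tC c₀ ∧ IsEndpoint tC c₁ ∧ f c₀ = a ∧ f c₁ = b

/-- The COTS-distance: one less than the minimal cardinality of a COTS-arc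
joining two points (`⊤` if there is no such arc). -/
noncomputable def cotsDist {X : Type*} (t : TopologicalSpace X) (x y : X) : ℕ∞ :=
  sInf {n : ℕ∞ | ∃ A : Set X, IsCOTSArcFromTo t A x y ∧ (A.ncard : ℕ∞) = n + 1}

/-- The Khalimsky topology on ℤ. -/
def khal : TopologicalSpace ℤ :=
  TopologicalSpace.generateFrom
    {s : Set ℤ | ∃ n : ℤ, (Odd n ∧ s = {n}) ∨ (Even n ∧ s = {n - 1, n, n + 1})}

/-- The Khalimsky plane topology on ℤ × ℤ. -/
def khalPlane : TopologicalSpace (ℤ × ℤ) := @instTopologicalSpaceProd ℤ ℤ khal khal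

/-- A point of the Khalimsky plane is pure if its coordinates have the same parity. -/
def IsPurePt (p : ℤ × ℤ) : Prop := (Even p.1 ∧ Even p.2) ∨ (Odd p.1 ∧ Odd p.2)

/-- A digital Jordan curve: a finite set of at least 4 points such that removing
any point leaves a COTS-arc. -/
def IsJordanCurve {X : Type*} (t : TopologicalSpace X) (J : Set X) : Prop :=
  J.Finite ∧ 4 ≤ J.ncard ∧ ∀ j ∈ J, IsCOTSArc t (J \ {j})

/-- The interior of a digital Jordan curve in the Khalimsky plane: the union of the
finite (bounded) connected components of its complement. -/
def jInterior (J : Set (ℤ × ℤ)) : Set (ℤ × ℤ) :=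
  ⋃₀ {S | ∃ p ∉ J, S = @connectedComponentIn _ khalPlane Jᶜ p ∧ S.Finite}

/-- The diagonal segment of the Khalimsky plane joining `p` to `q`. -/
def diagSeg (p q : ℤ × ℤ) : Set (ℤ × ℤ) :=
  (fun k : ℤ => (p.1 + k * (q.1 - p.1).sign, p.2 + k * (q.2 - p.2).sign)) ''
    Set.Icc 0 |q.1 - p.1|

/-!
In the Khalimsky plane a point specializes only to points at Chebyshev distance at most one, so
the signed coordinates `u = ±(x.1 - p.1)` and `v = ±(x.2 - p.2)`, oriented from `p` towards `q`,
change by at most one between related points. Such functions have the intermediate value property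
on preconnected sets, because the minimal open neighbourhoods of the points on either side of a
level would disconnect the set. Hence an arc from `p` to `q` takes every value `0, …, d` of `u`
(`d = |q.1 - p.1|`) and has at least `d + 1` points, while the diagonal, whose consecutive points
are related because `p` is pure, is an arc with exactly `d + 1` points. On an arc with `d + 1`
points `u` is a bijection onto `0, …, d` and points with consecutive values of `u` are related, so
`v`, which moves by at most one per step and has the same values as `u` at the ends, equals `u`
all along: the arc is the diagonal.
-/

open Function Topology

section Specialization

variable {X : Type*} [t : TopologicalSpace X]

lemma minOpenNhd_eq_nhdsKer (x : X) : minOpenNhd t x = nhdsKer {x} := by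
  simp only [minOpenNhd, nhdsKer_def, singleton_subset_iff]
  rfl

lemma specLE_iff_specializes {x y : X} : specLE t x y ↔ x ⤳ y := by
  rw [specLE, minOpenNhd_eq_nhdsKer, minOpenNhd_eq_nhdsKer, specializes_iff_nhdsKer_subset]

lemma mem_adjSet_iff {x y : X} : y ∈ adjSet t x ↔ x ≠ y ∧ (x ⤳ y ∨ y ⤳ x) := by
  simp only [adjSet, Adjacent, mem_ofPred_eq, specLE_iff_specializes]

lemma Specializes.isPreconnected_pair {x y : X} (h : x ⤳ y) : IsPreconnected ({x, y} : Set X) :=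
  isPreconnected_singleton.subset_closure (by simp)
    (insert_subset (subset_closure rfl) (singleton_subset_iff.2 h.mem_closure))

theorem isPreconnected_image_Icc_of_specializes {f : ℤ → X}
    (hf : ∀ k, f k ⤳ f (k + 1) ∨ f (k + 1) ⤳ f k) (a b : ℤ) :
    IsPreconnected (f '' Icc a b) := by
  rcases lt_or_ge b a with hba | hab
  · simpa [Icc_eq_empty_of_lt hba] using isPreconnected_empty
  induction b, hab using Int.leInduction with
  | base => simpa using isPreconnected_singleton
  | succ n hn ih =>
    have hsplit : f '' Icc a (n + 1) = f '' Icc a n ∪ {f n, f (n + 1)} := by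
      rw [← image_pair, ← image_union]
      congr 1
      ext k
      simp only [mem_Icc, mem_union, mem_insert_iff, mem_singleton_iff]
      omega
    rw [hsplit]
    refine ih.union (f n) (mem_image_of_mem f ⟨hn, le_rfl⟩) (mem_insert _ _) ?_
    rcases hf n with h | h
    · exact h.isPreconnected_pair
    · exact pair_comm (f n) _ ▸ h.isPreconnected_pair

/-- The discrete analogue of a continuous real function: on an Alexandrov-discrete space it has
the intermediate value property on preconnected sets. -/
def LipschitzAlongSpecializes (g : X → ℤ) : Prop :=
  ∀ ⦃x y : X⦄, x ⤳ y → |g x - g y| ≤ 1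

namespace LipschitzAlongSpecializes

variable {g : X → ℤ}

lemma abs_sub_le (hg : LipschitzAlongSpecializes g) {x y : X} (h : x ⤳ y ∨ y ⤳ x) :
    |g x - g y| ≤ 1 :=
  h.elim (fun h => hg h) (fun h => abs_sub_comm (g x) (g y) ▸ hg h)

lemma comp (hg : LipschitzAlongSpecializes g) {Y : Type*} [TopologicalSpace Y] {f : Y → X}
    (hf : Continuous f) : LipschitzAlongSpecializes (g ∘ f) :=
  fun _ _ h => hg (h.map hf)

lemma neg (hg : LipschitzAlongSpecializes g) : LipschitzAlongSpecializes (-g) :=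
  fun x y h => by rw [Pi.neg_apply, Pi.neg_apply, neg_sub_neg, abs_sub_comm]; exact hg h

end LipschitzAlongSpecializes

end Specialization

lemma abs_sub_le_of_abs_sub_succ_le {f : ℤ → ℤ} {a b : ℤ}
    (hstep : ∀ k ∈ Ico a b, |f (k + 1) - f k| ≤ 1) {i j : ℤ} (hai : a ≤ i) (hij : i ≤ j)
    (hjb : j ≤ b) : |f j - f i| ≤ j - i := by
  induction j, hij using Int.leInduction with
  | base => simp
  | succ n hin ih =>
    have h₁ := hstep n ⟨by omega, by omega⟩
    have h₂ := ih (by omega)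
    rw [abs_le] at *
    omega

lemma eqOn_Icc_of_abs_sub_succ_le {f : ℤ → ℤ} {a b : ℤ}
    (hstep : ∀ k ∈ Ico a b, |f (k + 1) - f k| ≤ 1) (ha : f a = a) (hb : f b = b) :
    EqOn f id (Icc a b) := by
  intro k ⟨hak, hkb⟩
  have h₁ := abs_sub_le_of_abs_sub_succ_le hstep le_rfl hak hkb
  have h₂ := abs_sub_le_of_abs_sub_succ_le hstep hak hkb le_rfl
  rw [ha, abs_le] at h₁
  rw [hb, abs_le] at h₂
  simp only [id]
  omega

section AlexandrovDiscrete

variable {X : Type*} [t : TopologicalSpace X] [AlexandrovDiscrete X]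

/-- Otherwise the minimal open neighbourhoods of the two parts would disconnect `S`. -/
theorem IsPreconnected.exists_specializes_of_mem_of_not_mem {S : Set X} (hS : IsPreconnected S)
    {P : X → Prop} {a b : X} (ha : a ∈ S) (hb : b ∈ S) (hPa : P a) (hPb : ¬ P b) :
    ∃ x ∈ S, ∃ y ∈ S, P x ∧ ¬ P y ∧ (x ⤳ y ∨ y ⤳ x) := by
  have hmem : ∀ x : X, x ∈ nhdsKer {x} := fun x => subset_nhdsKer rfl
  obtain ⟨z, hzS, hzU, hzV⟩ := hS (⋃ x ∈ {x ∈ S | P x}, nhdsKer {x})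
    (⋃ y ∈ {y ∈ S | ¬ P y}, nhdsKer {y})
    (isOpen_biUnion fun _ _ => isOpen_nhdsKer) (isOpen_biUnion fun _ _ => isOpen_nhdsKer)
    (fun z hz => (em (P z)).imp (fun h => mem_biUnion ⟨hz, h⟩ (hmem z))
      (fun h => mem_biUnion ⟨hz, h⟩ (hmem z)))
    ⟨a, ha, mem_biUnion ⟨ha, hPa⟩ (hmem a)⟩ ⟨b, hb, mem_biUnion ⟨hb, hPb⟩ (hmem b)⟩
  obtain ⟨x, ⟨hxS, hPx⟩, hzx⟩ := mem_iUnion₂.mp hzU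
  obtain ⟨y, ⟨hyS, hPy⟩, hzy⟩ := mem_iUnion₂.mp hzV
  rw [mem_nhdsKer_singleton] at hzx hzy
  by_cases hPz : P z
  · exact ⟨z, hzS, y, hyS, hPz, hPy, Or.inl hzy⟩
  · exact ⟨x, hxS, z, hzS, hPx, hPz, Or.inr hzx⟩

variable {g u v : X → ℤ} {S : Set X} {a b : X}

theorem IsPreconnected.exists_eq_of_le_of_le (hS : IsPreconnected S)
    (hg : LipschitzAlongSpecializes g) (ha : a ∈ S) (hb : b ∈ S) {c : ℤ} (hac : g a ≤ c)
    (hcb : c ≤ g b) : ∃ x ∈ S, g x = c := by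
  rcases hac.eq_or_lt with h | h
  · exact ⟨a, ha, h⟩
  obtain ⟨x, -, y, hyS, hx, hy, hxy⟩ :=
    hS.exists_specializes_of_mem_of_not_mem (P := fun x => g x < c) ha hb h (not_lt.2 hcb)
  have := hg.abs_sub_le hxy
  rw [abs_le] at this
  exact ⟨y, hyS, by omega⟩

theorem IsPreconnected.Icc_subset_image (hS : IsPreconnected S)
    (hg : LipschitzAlongSpecializes g) (ha : a ∈ S) (hb : b ∈ S) :
    Icc (g a) (g b) ⊆ g '' S :=
  fun _ hc => hS.exists_eq_of_le_of_le hg ha hb hc.1 hc.2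

theorem IsPreconnected.ncard_Icc_le (hS : IsPreconnected S) (hfin : S.Finite)
    (hg : LipschitzAlongSpecializes g) (ha : a ∈ S) (hb : b ∈ S) :
    (Icc (g a) (g b)).ncard ≤ S.ncard :=
  (ncard_le_ncard (hS.Icc_subset_image hg ha hb) (hfin.image g)).trans (ncard_image_le hfin)

theorem IsPreconnected.injOn_of_ncard_le (hS : IsPreconnected S) (hfin : S.Finite)
    (hg : LipschitzAlongSpecializes g) (ha : a ∈ S) (hb : b ∈ S)
    (hcard : S.ncard ≤ (Icc (g a) (g b)).ncard) :
    InjOn g S ∧ g '' S = Icc (g a) (g b) := by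
  have himage : g '' S = Icc (g a) (g b) :=
    (eq_of_subset_of_ncard_le (hS.Icc_subset_image hg ha hb)
      ((ncard_image_le hfin).trans hcard) (hfin.image g)).symm
  refine ⟨(ncard_image_iff hfin).1 (le_antisymm (ncard_image_le hfin) ?_), himage⟩
  rwa [himage]

/-- Points of `S` with consecutive values of `u` are related by specialization, so `v` moves by
at most one from each to the next while climbing from `u a` to `u b` in `u b - u a` steps. -/
theorem IsPreconnected.eqOn_of_injOn (hS : IsPreconnected S) (hu : LipschitzAlongSpecializes u)
    (hv : LipschitzAlongSpecializes v) (hinj : InjOn u S) (himage : u '' S = Icc (u a) (u b))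
    (ha : a ∈ S) (hb : b ∈ S) (hva : v a = u a) (hvb : v b = u b) : EqOn v u S := by
  have hstep : ∀ k ∈ Ico (u a) (u b), ∀ x ∈ S, ∀ y ∈ S, u x = k → u y = k + 1 →
      |v y - v x| ≤ 1 := by
    intro k hk x hx y hy hxk hyk
    obtain ⟨x', hx', y', hy', hx'k, hy'k, hxy⟩ :=
      hS.exists_specializes_of_mem_of_not_mem (P := fun x => u x ≤ k) ha hb hk.1 (not_le.2 hk.2)
    have h := hu.abs_sub_le hxy
    rw [abs_le] at h
    obtain rfl : x' = x := hinj hx' hx (by omega)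
    obtain rfl : y' = y := hinj hy' hy (by omega)
    rw [abs_sub_comm]
    exact hv.abs_sub_le hxy
  have hsurj : ∀ k ∈ Icc (u a) (u b), ∃ x ∈ S, u x = k := by
    rw [← himage]
    exact fun _ => id
  have : Nonempty X := ⟨a⟩
  choose! pt hptS hpt using hsurj
  have hpt_eq : ∀ x ∈ S, pt (u x) = x := fun x hx =>
    hinj (hptS _ (himage ▸ mem_image_of_mem u hx)) hx (hpt _ (himage ▸ mem_image_of_mem u hx))
  have hvpt : EqOn (v ∘ pt) id (Icc (u a) (u b)) := by
    refine eqOn_Icc_of_abs_sub_succ_le (fun k hk => ?_) ?_ ?_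
    · have hk' : k ∈ Icc (u a) (u b) := Ico_subset_Icc_self hk
      have hk1 : k + 1 ∈ Icc (u a) (u b) := ⟨by linarith [hk.1], hk.2⟩
      exact hstep k hk _ (hptS k hk') _ (hptS _ hk1) (hpt k hk') (hpt _ hk1)
    · simp [hpt_eq a ha, hva]
    · simp [hpt_eq b hb, hvb]
  intro x hx
  simpa [hpt_eq x hx] using hvpt (himage ▸ mem_image_of_mem u hx : u x ∈ Icc (u a) (u b))

end AlexandrovDiscrete

lemma exists_lt_lt_of_ne {α β : Type*} [LinearOrder β] (g : α → β) {a b c : α}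
    (hab : g a ≠ g b) (hac : g a ≠ g c) (hbc : g b ≠ g c) :
    ∃ y ∈ ({a, b, c} : Set α), ∃ x ∈ ({a, b, c} : Set α), ∃ z ∈ ({a, b, c} : Set α),
      g x < g y ∧ g y < g z := by
  rcases hab.lt_or_gt with h₁ | h₁ <;> rcases hac.lt_or_gt with h₂ | h₂ <;>
    rcases hbc.lt_or_gt with h₃ | h₃
  · exact ⟨b, by simp, a, by simp, c, by simp, h₁, h₃⟩
  · exact ⟨c, by simp, a, by simp, b, by simp, h₂, h₃⟩
  · exact absurd (h₁.trans h₃) (not_lt.2 h₂.le)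
  · exact ⟨a, by simp, c, by simp, b, by simp, h₂, h₁⟩
  · exact ⟨a, by simp, b, by simp, c, by simp, h₁, h₂⟩
  · exact absurd (h₃.trans h₁) (not_lt.2 h₂.le)
  · exact ⟨c, by simp, b, by simp, a, by simp, h₃, h₂⟩
  · exact ⟨b, by simp, c, by simp, a, by simp, h₃, h₁⟩

section Endpoint

variable {X : Type*} [t : TopologicalSpace X] {g : X → ℤ}

theorem isEndpoint_of_forall_le (hg : LipschitzAlongSpecializes g) (hinj : Injective g) {x : X}
    (hx : ∀ y, g x ≤ g y) : IsEndpoint t x := by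
  have hadj : ∀ y ∈ adjSet t x, g y = g x + 1 := by
    intro y hy
    obtain ⟨hne, hxy⟩ := mem_adjSet_iff.1 hy
    have h₁ := hg.abs_sub_le hxy
    have h₂ := hinj.ne hne
    have h₃ := hx y
    rw [abs_le] at h₁
    omega
  have hsub : (adjSet t x).Subsingleton := fun y hy z hz =>
    hinj ((hadj y hy).trans (hadj z hz).symm)
  exact (ncard_le_one hsub.finite).2 fun y hy z hz => hsub hy hz

theorem isEndpoint_of_forall_ge (hg : LipschitzAlongSpecializes g) (hinj : Injective g) {x : X}
    (hx : ∀ y, g y ≤ g x) : IsEndpoint t x :=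
  isEndpoint_of_forall_le hg.neg (neg_injective.comp hinj) fun y => neg_le_neg (hx y)

end Endpoint

section COTS

variable {X : Type*} [t : TopologicalSpace X] [AlexandrovDiscrete X] {g : X → ℤ}

/-- The point with the middle value of `g` separates the other two: by the intermediate value
property, a component of its complement containing both would contain it. -/
theorem exists_separating_of_injective (hg : LipschitzAlongSpecializes g) (hinj : Injective g)
    {Y : Set X} (hY : Y.ncard = 3) :
    ∃ y ∈ Y, ∃ a ∈ Y \ {y}, ∃ b ∈ Y \ {y},
      connectedComponentIn {y}ᶜ a ≠ connectedComponentIn {y}ᶜ b := by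
  obtain ⟨a, b, c, hab, hac, hbc, rfl⟩ := ncard_eq_three.mp hY
  obtain ⟨y, hy, x, hx, z, hz, hxy, hyz⟩ :=
    exists_lt_lt_of_ne g (hinj.ne hab) (hinj.ne hac) (hinj.ne hbc)
  have hxy' : x ≠ y := fun h => hxy.ne (congrArg g h)
  have hzy : z ≠ y := fun h => hyz.ne' (congrArg g h)
  refine ⟨y, hy, x, ⟨hx, hxy'⟩, z, ⟨hz, hzy⟩, fun hcomp => ?_⟩
  have hzT : z ∈ connectedComponentIn {y}ᶜ x := hcomp ▸ mem_connectedComponentIn hzy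
  obtain ⟨w, hwT, hw⟩ := isPreconnected_connectedComponentIn.exists_eq_of_le_of_le hg
    (mem_connectedComponentIn hxy') hzT hxy.le hyz.le
  exact connectedComponentIn_subset _ _ hwT (hinj hw)

theorem isCOTS_of_injective [ConnectedSpace X] (hg : LipschitzAlongSpecializes g)
    (hinj : Injective g) : IsCOTS t :=
  ⟨‹_›, fun _ => exists_separating_of_injective hg hinj⟩

end COTS

section Arcs

variable {X : Type*} [t : TopologicalSpace X] {A : Set X} {a b : X}

lemma IsCOTSArcFromTo.finite (h : IsCOTSArcFromTo t A a b) : A.Finite := by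
  obtain ⟨C, tC, hfin, -, f, -, rfl, -⟩ := h
  exact finite_range f

lemma IsCOTSArcFromTo.isPreconnected (h : IsCOTSArcFromTo t A a b) : IsPreconnected A := by
  obtain ⟨C, tC, -, ⟨hconn, -⟩, f, hf, rfl, -⟩ := h
  exact isPreconnected_range hf.continuous

lemma IsCOTSArcFromTo.left_mem (h : IsCOTSArcFromTo t A a b) : a ∈ A := by
  obtain ⟨C, tC, -, -, f, -, rfl, c₀, -, -, -, rfl, -⟩ := h
  exact mem_range_self c₀

lemma IsCOTSArcFromTo.right_mem (h : IsCOTSArcFromTo t A a b) : b ∈ A := by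
  obtain ⟨C, tC, -, -, f, -, rfl, -, c₁, -, -, -, rfl⟩ := h
  exact mem_range_self c₁

theorem cotsDist_eq_of_forall_le {n : ℕ} (hA : IsCOTSArcFromTo t A a b) (hcard : A.ncard = n + 1)
    (hmin : ∀ B, IsCOTSArcFromTo t B a b → n + 1 ≤ B.ncard) : cotsDist t a b = n := by
  refine le_antisymm (sInf_le ⟨A, hA, by rw [hcard]; push_cast; rfl⟩) (le_sInf ?_)
  rintro m ⟨B, hB, hBm⟩
  have h := hmin B hB
  have : ((n + 1 : ℕ) : ℕ∞) ≤ m + 1 := hBm ▸ Nat.cast_le.2 h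
  push_cast at this
  exact (ENat.add_le_add_iff_right ENat.one_ne_top).1 this

end Arcs

def signedOffset (a b c : ℤ) : ℤ := (b - a).sign * (c - a)

section SignedOffset

variable {a b : ℤ}

lemma sign_mul_sign_of_ne_zero {n : ℤ} (h : n ≠ 0) : n.sign * n.sign = 1 := by
  rw [← abs_mul_abs_self, Int.abs_sign_of_ne_zero h, one_mul]

lemma abs_sign_le_one (n : ℤ) : |n.sign| ≤ 1 := by
  obtain h | h | h := n.sign_trichotomy <;> simp [h]

@[simp] lemma signedOffset_self : signedOffset a b a = 0 := by simp [signedOffset]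

lemma signedOffset_right : signedOffset a b b = |b - a| := Int.sign_mul_self_eq_abs _

lemma abs_signedOffset_sub_le (c c' : ℤ) :
    |signedOffset a b c - signedOffset a b c'| ≤ |c - c'| := by
  rw [signedOffset, signedOffset, ← mul_sub, sub_sub_sub_cancel_right, abs_mul]
  exact mul_le_of_le_one_left (abs_nonneg _) (abs_sign_le_one _)

lemma signedOffset_add_mul_sign {k : ℤ} (hk : k ∈ Icc 0 |b - a|) :
    signedOffset a b (a + k * (b - a).sign) = k := by
  rcases eq_or_ne (b - a) 0 with h | h
  · rw [h, abs_zero] at hk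
    obtain rfl : k = 0 := le_antisymm hk.2 hk.1
    simp
  · rw [signedOffset, add_sub_cancel_left, mul_left_comm, sign_mul_sign_of_ne_zero h, mul_one]

lemma signedOffset_eq_iff (h : b ≠ a) {c k : ℤ} :
    signedOffset a b c = k ↔ c = a + k * (b - a).sign := by
  have hs := sign_mul_sign_of_ne_zero (sub_ne_zero.2 h)
  constructor
  · rintro rfl
    rw [signedOffset, mul_right_comm, hs, one_mul, add_sub_cancel]
  · rintro rfl
    rw [signedOffset, add_sub_cancel_left, mul_left_comm, hs, mul_one]

end SignedOffset

lemma ncard_Icc_zero_abs (n : ℤ) : (Icc 0 |n|).ncard = n.natAbs + 1 := by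
  rw [← Finset.coe_Icc, ncard_coe_finset, Int.card_Icc, Int.abs_eq_natAbs]
  omega

def diagPt (p q : ℤ × ℤ) (k : ℤ) : ℤ × ℤ :=
  (p.1 + k * (q.1 - p.1).sign, p.2 + k * (q.2 - p.2).sign)

section Diagonal

variable {p q : ℤ × ℤ}

lemma diagSeg_eq_image : diagSeg p q = diagPt p q '' Icc 0 |q.1 - p.1| := rfl

lemma fst_eq_iff_snd_eq_of_abs_sub_eq (hd : |q.1 - p.1| = |q.2 - p.2|) :
    q.1 = p.1 ↔ q.2 = p.2 := by
  rw [← sub_eq_zero, ← abs_eq_zero, hd, abs_eq_zero, sub_eq_zero]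

lemma signedOffset_diagPt_fst {k : ℤ} (hk : k ∈ Icc 0 |q.1 - p.1|) :
    signedOffset p.1 q.1 (diagPt p q k).1 = k :=
  signedOffset_add_mul_sign hk

lemma signedOffset_diagPt_snd (hd : |q.1 - p.1| = |q.2 - p.2|) {k : ℤ}
    (hk : k ∈ Icc 0 |q.1 - p.1|) : signedOffset p.2 q.2 (diagPt p q k).2 = k :=
  signedOffset_add_mul_sign (hd ▸ hk)

lemma injOn_diagPt : InjOn (diagPt p q) (Icc 0 |q.1 - p.1|) := fun k hk k' hk' h => by
  rw [← signedOffset_diagPt_fst hk, ← signedOffset_diagPt_fst hk', h]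

lemma ncard_diagSeg : (diagSeg p q).ncard = (q.1 - p.1).natAbs + 1 := by
  rw [diagSeg_eq_image, injOn_diagPt.ncard_image, ncard_Icc_zero_abs]

lemma finite_diagSeg : (diagSeg p q).Finite := (finite_Icc _ _).image _

lemma left_mem_diagSeg : p ∈ diagSeg p q := ⟨0, ⟨le_rfl, abs_nonneg _⟩, by simp⟩

lemma diagPt_abs (hd : |q.1 - p.1| = |q.2 - p.2|) : diagPt p q |q.1 - p.1| = q :=
  Prod.ext (by show p.1 + _ = _; rw [mul_comm, Int.sign_mul_abs, add_sub_cancel])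
    (by show p.2 + _ = _; rw [hd, mul_comm, Int.sign_mul_abs, add_sub_cancel])

lemma right_mem_diagSeg (hd : |q.1 - p.1| = |q.2 - p.2|) : q ∈ diagSeg p q :=
  ⟨|q.1 - p.1|, ⟨abs_nonneg _, le_rfl⟩, diagPt_abs hd⟩

lemma isPurePt_diagPt (hp : IsPurePt p) (h₁ : q.1 ≠ p.1) (h₂ : q.2 ≠ p.2) (k : ℤ) :
    IsPurePt (diagPt p q k) := by
  have hsign : ∀ n : ℤ, n ≠ 0 → n.sign = 1 ∨ n.sign = -1 := fun n hn => by
    obtain h | h | h := n.sign_trichotomy <;> simp_all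
  unfold IsPurePt at hp ⊢
  simp only [diagPt, Int.even_iff, Int.odd_iff] at hp ⊢
  rcases hsign _ (sub_ne_zero.2 h₁) with h | h <;> rcases hsign _ (sub_ne_zero.2 h₂) with h' | h' <;>
    rw [h, h'] <;> omega

end Diagonal

def khalNhd (n : ℤ) : Set ℤ := if Even n then {n - 1, n, n + 1} else {n}

lemma mem_khalNhd_self (n : ℤ) : n ∈ khalNhd n := by
  unfold khalNhd
  split_ifs <;> simp

section Khalimsky

attribute [local instance] khal

lemma isOpen_khalNhd (n : ℤ) : IsOpen (khalNhd n) := by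
  apply TopologicalSpace.GenerateOpen.basic
  by_cases h : Even n
  · exact ⟨n, Or.inr ⟨h, if_pos h⟩⟩
  · exact ⟨n, Or.inl ⟨Int.not_even_iff_odd.mp h, if_neg h⟩⟩

lemma khalNhd_subset_of_isOpen {U : Set ℤ} (hU : IsOpen U) {n : ℤ} (hn : n ∈ U) :
    khalNhd n ⊆ U := by
  change TopologicalSpace.GenerateOpen _ U at hU
  induction hU generalizing n with
  | basic s hs =>
    obtain ⟨m, ⟨hm, rfl⟩ | ⟨hm, rfl⟩⟩ := hs
    · obtain rfl : n = m := hn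
      simp [khalNhd, Int.not_even_iff_odd.2 hm]
    · by_cases he : Even n
      · obtain rfl : n = m := by
          simp only [mem_insert_iff, mem_singleton_iff] at hn
          rcases he with ⟨i, hi⟩
          rcases hm with ⟨j, hj⟩
          omega
        simp [khalNhd, he]
      · simpa [khalNhd, he] using hn
  | univ => exact subset_univ _
  | inter s t _ _ ihs iht => exact subset_inter (ihs hn.1) (iht hn.2)
  | sUnion S _ ih =>
    obtain ⟨s, hs, hns⟩ := hn
    exact (ih s hs hns).trans (subset_sUnion_of_mem hs)

lemma nhdsKer_singleton_khal (n : ℤ) : nhdsKer {n} = khalNhd n :=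
  (nhdsKer_minimal (singleton_subset_iff.2 (mem_khalNhd_self n)) (isOpen_khalNhd n)).antisymm
    (subset_nhdsKer_iff.2 fun _ hU hn => khalNhd_subset_of_isOpen hU (singleton_subset_iff.1 hn))

lemma khal_alexandrovDiscrete : AlexandrovDiscrete ℤ where
  isOpen_sInter _ hS := isOpen_iff_mem_nhds.2 fun n hn =>
    Filter.mem_of_superset ((isOpen_khalNhd n).mem_nhds (mem_khalNhd_self n))
      (subset_sInter fun s hs => khalNhd_subset_of_isOpen (hS s hs) (hn s hs))

attribute [local instance] khal_alexandrovDiscrete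

lemma khalPlane_alexandrovDiscrete : @AlexandrovDiscrete (ℤ × ℤ) khalPlane :=
  Prod.instAlexandrovDiscrete

attribute [local instance] khalPlane_alexandrovDiscrete

lemma khal_specializes_iff {m n : ℤ} : m ⤳ n ↔ m ∈ khalNhd n := by
  rw [← mem_nhdsKer_singleton, nhdsKer_singleton_khal]

lemma khal_abs_sub_le_one_of_specializes {m n : ℤ} (h : m ⤳ n) : |m - n| ≤ 1 := by
  rw [khal_specializes_iff, khalNhd] at h
  rw [abs_le]
  split_ifs at h <;> simp only [mem_insert_iff, mem_singleton_iff] at h <;> omega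

lemma khal_specializes_of_even {m n : ℤ} (hn : Even n) (h : |m - n| ≤ 1) : m ⤳ n := by
  rw [khal_specializes_iff, khalNhd, if_pos hn]
  rw [abs_le] at h
  simp only [mem_insert_iff, mem_singleton_iff]
  omega

/-- Of two diagonal neighbours, the one with even coordinates is the closed point of the pair. -/
lemma IsPurePt.specializes_or_of_abs_sub_eq_one {x y : ℤ × ℤ} (hx : IsPurePt x)
    (h₁ : |y.1 - x.1| = 1) (h₂ : |y.2 - x.2| = 1) : x ⤳ y ∨ y ⤳ x := by
  rcases hx with ⟨he₁, he₂⟩ | ⟨ho₁, ho₂⟩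
  · exact Or.inr (specializes_prod.2 ⟨khal_specializes_of_even he₁ h₁.le, khal_specializes_of_even he₂ h₂.le⟩)
  · rw [abs_sub_comm] at h₁ h₂
    rw [abs_eq zero_le_one] at h₁ h₂
    rw [Int.odd_iff] at ho₁ ho₂
    exact Or.inl (specializes_prod.2
      ⟨khal_specializes_of_even (Int.even_iff.2 (by omega)) (by rw [abs_le]; omega),
        khal_specializes_of_even (Int.even_iff.2 (by omega)) (by rw [abs_le]; omega)⟩)

lemma lipschitzAlongSpecializes_signedOffset_fst (a b : ℤ) :
    LipschitzAlongSpecializes fun x : ℤ × ℤ => signedOffset a b x.1 := fun _ _ h =>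
  (abs_signedOffset_sub_le _ _).trans (khal_abs_sub_le_one_of_specializes (h.map continuous_fst))

lemma lipschitzAlongSpecializes_signedOffset_snd (a b : ℤ) :
    LipschitzAlongSpecializes fun x : ℤ × ℤ => signedOffset a b x.2 := fun _ _ h =>
  (abs_signedOffset_sub_le _ _).trans (khal_abs_sub_le_one_of_specializes (h.map continuous_snd))

variable {p q : ℤ × ℤ}

lemma diagPt_specializes_or (hp : IsPurePt p) (hd : |q.1 - p.1| = |q.2 - p.2|) (k : ℤ) :
    diagPt p q k ⤳ diagPt p q (k + 1) ∨ diagPt p q (k + 1) ⤳ diagPt p q k := by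
  by_cases h₁ : q.1 = p.1
  · have h₂ := (fst_eq_iff_snd_eq_of_abs_sub_eq hd).1 h₁
    left
    simp only [diagPt, h₁, h₂, sub_self, Int.sign_zero, mul_zero, add_zero]
    exact specializes_rfl
  · have h₂ := mt (fst_eq_iff_snd_eq_of_abs_sub_eq hd).2 h₁
    refine (isPurePt_diagPt hp h₁ h₂ k).specializes_or_of_abs_sub_eq_one ?_ ?_ <;>
      simp only [diagPt, add_mul, one_mul, add_sub_add_left_eq_sub, add_sub_cancel_left]
    · exact Int.abs_sign_of_ne_zero (sub_ne_zero.2 h₁)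
    · exact Int.abs_sign_of_ne_zero (sub_ne_zero.2 h₂)

lemma isConnected_diagSeg (hp : IsPurePt p) (hd : |q.1 - p.1| = |q.2 - p.2|) :
    IsConnected (diagSeg p q) :=
  ⟨⟨p, left_mem_diagSeg⟩, isPreconnected_image_Icc_of_specializes (diagPt_specializes_or hp hd) _ _⟩

theorem isCOTSArcFromTo_diagSeg (hp : IsPurePt p) (hd : |q.1 - p.1| = |q.2 - p.2|) :
    IsCOTSArcFromTo khalPlane (diagSeg p q) p q := by
  let g : diagSeg p q → ℤ := fun x => signedOffset p.1 q.1 x.1.1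
  have hg : LipschitzAlongSpecializes g :=
    (lipschitzAlongSpecializes_signedOffset_fst _ _).comp continuous_subtype_val
  have hgIcc : ∀ x, g x ∈ Icc 0 |q.1 - p.1| := by
    rintro ⟨x, hx⟩
    rw [diagSeg_eq_image] at hx
    obtain ⟨k, hk, rfl⟩ := hx
    simpa only [g, signedOffset_diagPt_fst hk] using hk
  have hinj : Injective g := by
    rintro ⟨x, hx⟩ ⟨y, hy⟩ h
    rw [diagSeg_eq_image] at hx hy
    obtain ⟨k, hk, rfl⟩ := hx
    obtain ⟨k', hk', rfl⟩ := hy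
    simp only [g, signedOffset_diagPt_fst hk, signedOffset_diagPt_fst hk'] at h
    subst h
    rfl
  have : ConnectedSpace (diagSeg p q) := Subtype.connectedSpace (isConnected_diagSeg hp hd)
  have : Finite (diagSeg p q) := finite_diagSeg.to_subtype
  refine ⟨diagSeg p q, inferInstance, inferInstance, isCOTS_of_injective hg hinj, (↑),
    IsEmbedding.subtypeVal, Subtype.range_val, ⟨p, left_mem_diagSeg⟩, ⟨q, right_mem_diagSeg hd⟩,
    isEndpoint_of_forall_le hg hinj fun x => ?_, isEndpoint_of_forall_ge hg hinj fun x => ?_,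
    rfl, rfl⟩
  · simpa [g] using (hgIcc x).1
  · simpa [g, signedOffset_right] using (hgIcc x).2

theorem natAbs_add_one_le_ncard_of_isCOTSArcFromTo {A : Set (ℤ × ℤ)} (hA : IsCOTSArcFromTo khalPlane A p q) :
    (q.1 - p.1).natAbs + 1 ≤ A.ncard := by
  simpa [signedOffset_right, ncard_Icc_zero_abs] using
    hA.isPreconnected.ncard_Icc_le hA.finite (lipschitzAlongSpecializes_signedOffset_fst p.1 q.1) hA.left_mem
      hA.right_mem

theorem cotsDist_eq_natAbs (hp : IsPurePt p) (hd : |q.1 - p.1| = |q.2 - p.2|) :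
    cotsDist khalPlane p q = (q.1 - p.1).natAbs :=
  cotsDist_eq_of_forall_le (isCOTSArcFromTo_diagSeg hp hd) ncard_diagSeg
    fun _ hB => natAbs_add_one_le_ncard_of_isCOTSArcFromTo hB

theorem eq_diagSeg_of_ncard_le (hd : |q.1 - p.1| = |q.2 - p.2|) {A : Set (ℤ × ℤ)}
    (hA : IsCOTSArcFromTo khalPlane A p q) (hcard : A.ncard ≤ (q.1 - p.1).natAbs + 1) :
    A = diagSeg p q := by
  set u := fun x : ℤ × ℤ => signedOffset p.1 q.1 x.1
  set v := fun x : ℤ × ℤ => signedOffset p.2 q.2 x.2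
  have hu := lipschitzAlongSpecializes_signedOffset_fst p.1 q.1
  have hS := hA.isPreconnected
  obtain ⟨hinj, himage⟩ := hS.injOn_of_ncard_le hA.finite hu hA.left_mem hA.right_mem
    (by simpa [u, signedOffset_right, ncard_Icc_zero_abs] using hcard)
  have heq : EqOn v u A := hS.eqOn_of_injOn hu (lipschitzAlongSpecializes_signedOffset_snd p.2 q.2) hinj himage
    hA.left_mem hA.right_mem (by simp [u, v]) (by simp [u, v, signedOffset_right, hd])
  simp only [signedOffset_self, signedOffset_right] at himage
  refine eq_of_subset_of_ncard_le (fun x hx => ?_)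
    (by rw [ncard_diagSeg]; exact natAbs_add_one_le_ncard_of_isCOTSArcFromTo hA) finite_diagSeg
  by_cases h₁ : q.1 = p.1
  · obtain rfl : x = p := hinj hx hA.left_mem (by simp [signedOffset, h₁])
    exact left_mem_diagSeg
  · have h₂ := mt (fst_eq_iff_snd_eq_of_abs_sub_eq hd).2 h₁
    have hux : u x ∈ Icc 0 |q.1 - p.1| := himage ▸ mem_image_of_mem u hx
    refine ⟨u x, hux, Prod.ext ?_ ?_⟩
    · exact ((signedOffset_eq_iff h₁).1 rfl).symm
    · exact ((signedOffset_eq_iff h₂).1 (heq hx)).symm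

end Khalimsky

theorem stmt12_general (p q : ℤ × ℤ) (hp : IsPurePt p)
    (hd : |q.1 - p.1| = |q.2 - p.2|) :
    (∃! A : Set (ℤ × ℤ), IsCOTSArcFromTo khalPlane A p q ∧
        (A.ncard : ℕ∞) = cotsDist khalPlane p q + 1) ∧
    ∀ A : Set (ℤ × ℤ), (IsCOTSArcFromTo khalPlane A p q ∧
        (A.ncard : ℕ∞) = cotsDist khalPlane p q + 1) → A = diagSeg p q := by
  have hdist := cotsDist_eq_natAbs hp hd
  have hunique : ∀ A : Set (ℤ × ℤ), (IsCOTSArcFromTo khalPlane A p q ∧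
      (A.ncard : ℕ∞) = cotsDist khalPlane p q + 1) → A = diagSeg p q := by
    rintro A ⟨hA, hcard⟩
    rw [hdist] at hcard
    exact eq_diagSeg_of_ncard_le hd hA (by exact_mod_cast hcard.le)
  refine ⟨⟨diagSeg p q, ⟨isCOTSArcFromTo_diagSeg hp hd, ?_⟩, hunique⟩, hunique⟩
  rw [hdist, ncard_diagSeg]
  push_cast
  rfl

/-- For pure points on a common diagonal, the shortest COTS-arc joining them is
unique, and it consists exactly of the points of the diagonal between them. -/
theorem stmt12 (p q : ℤ × ℤ) (hp : IsPurePt p) (hq : IsPurePt q)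
    (hd : |q.1 - p.1| = |q.2 - p.2|) :
    (∃! A : Set (ℤ × ℤ), IsCOTSArcFromTo khalPlane A p q ∧
        (A.ncard : ℕ∞) = cotsDist khalPlane p q + 1) ∧
    ∀ A : Set (ℤ × ℤ), (IsCOTSArcFromTo khalPlane A p q ∧
        (A.ncard : ℕ∞) = cotsDist khalPlane p q + 1) → A = diagSeg p q :=
  stmt12_general p q hp hd
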